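/- arXiv:1408.4235 — 5 statements merged into one kernel-verified Lean document; each statement's English description precedes it below -/
import Mathlib

section
/- For every n ≥ 2, the Eulerian polynomial A_n(x) equals ∑_{j=0}^{n-2} ((n-j-1)x + j+1)·A_{n-1,j}(x). -/
open Polynomial

noncomputable section

/-- Number of descents of a permutation of `Fin n` (viewed as the word `σ 0, σ 1, …, σ (n-1)`). -/
def descents {n : ℕ} (σ : Equiv.Perm (Fin n)) : ℕ :=
  (Finset.univ.filter fun i : Fin n =>
    ∃ h : (i : ℕ) + 1 < n, σ ⟨(i : ℕ) + 1, h⟩ < σ i).card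

/-- The Eulerian polynomial `A_n(x) = ∑_{σ ∈ S_n} x^{des σ}`. -/
def eulerianPoly (n : ℕ) : Polynomial ℝ :=
  ∑ σ : Equiv.Perm (Fin n), X ^ descents σ

/-- The refined Eulerian polynomial `A_{n,i}(x)`: the descent generating polynomial over
permutations of `[n]` whose last entry is `n - i` (0-based: `σ (n-1) = n - 1 - i`). -/
def refinedEulerianPoly (n i : ℕ) : Polynomial ℝ :=
  ∑ σ ∈ Finset.univ.filter (fun σ : Equiv.Perm (Fin n) =>
      ∃ h : 0 < n, (σ ⟨n - 1, Nat.sub_lt h Nat.one_pos⟩ : ℕ) = n - 1 - i),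
    X ^ descents σ

def myAppend {k : ℕ} (τ : Equiv.Perm (Fin (k+1))) (v : Fin (k+2)) : Equiv.Perm (Fin (k+2)) :=
  finSuccEquivLast.trans ((τ.optionCongr).trans (finSuccEquiv' v).symm)
lemma myAppend_castSucc {k : ℕ} (τ : Equiv.Perm (Fin (k+1))) (v : Fin (k+2)) (i : Fin (k+1)) :
    myAppend τ v i.castSucc = v.succAbove (τ i) := by
  simp [myAppend, finSuccEquivLast_castSucc, finSuccEquiv'_symm_some]
lemma myAppend_last {k : ℕ} (τ : Equiv.Perm (Fin (k+1))) (v : Fin (k+2)) :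
    myAppend τ v (Fin.last (k+1)) = v := by
  simp [myAppend]
lemma descents_eq_sum {n : ℕ} (σ : Equiv.Perm (Fin n)) :
    descents σ = ∑ i : Fin n, if ∃ h : (i : ℕ) + 1 < n, σ ⟨(i : ℕ) + 1, h⟩ < σ i then 1 else 0 := by
  rw [descents, Finset.card_filter]
lemma descents_myAppend {k : ℕ} (τ : Equiv.Perm (Fin (k+1))) (v : Fin (k+2)) :
    descents (myAppend τ v) =
      descents τ + (if (v : ℕ) ≤ (τ (Fin.last k) : ℕ) then 1 else 0) := by
  rw [descents_eq_sum, descents_eq_sum, Fin.sum_univ_castSucc, Fin.sum_univ_castSucc]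
  conv_rhs => rw [Fin.sum_univ_castSucc]
  have hC : (if ∃ (h : ((Fin.last (k+1) : Fin (k+2)) : ℕ) + 1 < k + 2),
      (myAppend τ v) ⟨((Fin.last (k+1) : Fin (k+2)) : ℕ) + 1, h⟩ < (myAppend τ v) (Fin.last (k+1))
      then 1 else 0) = 0 := by
    have : ¬ ((Fin.last (k+1) : Fin (k+2)) : ℕ) + 1 < k + 2 := by simp
    simp [this]
  have hg : (if ∃ (h : ((Fin.last k : Fin (k+1)) : ℕ) + 1 < k + 1),
      τ ⟨((Fin.last k : Fin (k+1)) : ℕ) + 1, h⟩ < τ (Fin.last k) then 1 else 0) = 0 := by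
    have : ¬ ((Fin.last k : Fin (k+1)) : ℕ) + 1 < k + 1 := by simp
    simp [this]
  have hB : (if ∃ (h : (((Fin.last k).castSucc : Fin (k+2)) : ℕ) + 1 < k + 2),
      (myAppend τ v) ⟨(((Fin.last k).castSucc : Fin (k+2)) : ℕ) + 1, h⟩
        < (myAppend τ v) (Fin.last k).castSucc then 1 else 0)
      = (if (v : ℕ) ≤ (τ (Fin.last k) : ℕ) then 1 else 0) := by
    have h1 : (((Fin.last k).castSucc : Fin (k+2)) : ℕ) + 1 < k + 2 := by simp
    have h2 : (⟨(((Fin.last k).castSucc : Fin (k+2)) : ℕ) + 1, h1⟩ : Fin (k+2)) = Fin.last (k+1) := by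
      ext; simp
    have hiff : (∃ (h : (((Fin.last k).castSucc : Fin (k+2)) : ℕ) + 1 < k + 2),
        (myAppend τ v) ⟨(((Fin.last k).castSucc : Fin (k+2)) : ℕ) + 1, h⟩
          < (myAppend τ v) (Fin.last k).castSucc) ↔ (v : ℕ) ≤ (τ (Fin.last k) : ℕ) := by
      constructor
      · rintro ⟨h, hlt⟩
        rw [h2, myAppend_last, myAppend_castSucc] at hlt
        rw [Fin.lt_succAbove_iff_le_castSucc] at hlt
        exact hlt
      · intro hle
        refine ⟨h1, ?_⟩
        rw [h2, myAppend_last, myAppend_castSucc, Fin.lt_succAbove_iff_le_castSucc]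
        exact hle
    rw [if_congr hiff rfl rfl]
  rw [hC, hg, hB, add_zero, add_zero]
  congr 1
  apply Finset.sum_congr rfl
  intro i _
  have h1 : (i.castSucc.castSucc : ℕ) = (i : ℕ) := rfl
  have hlt : (i : ℕ) + 1 < k + 1 := by omega
  have h2 : ∀ h : (i.castSucc.castSucc : ℕ) + 1 < k + 2,
      (⟨(i.castSucc.castSucc : ℕ) + 1, h⟩ : Fin (k+2)) = (⟨(i : ℕ) + 1, hlt⟩ : Fin (k+1)).castSucc := by
    intro h; ext; simp
  have hiff : (∃ (h : (i.castSucc.castSucc : ℕ) + 1 < k + 2),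
      (myAppend τ v) ⟨(i.castSucc.castSucc : ℕ) + 1, h⟩ < (myAppend τ v) i.castSucc.castSucc)
      ↔ (∃ (h : (i.castSucc : ℕ) + 1 < k + 1), τ ⟨(i.castSucc : ℕ) + 1, h⟩ < τ i.castSucc) := by
    constructor
    · rintro ⟨h, hlt'⟩
      rw [h2 h, myAppend_castSucc, myAppend_castSucc, Fin.succAbove_lt_succAbove_iff] at hlt'
      exact ⟨hlt, hlt'⟩
    · rintro ⟨h, hlt'⟩
      refine ⟨by omega, ?_⟩
      rw [h2 _, myAppend_castSucc, myAppend_castSucc, Fin.succAbove_lt_succAbove_iff]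
      exact hlt'
  rw [if_congr hiff rfl rfl]

def myAppendEquiv (k : ℕ) : Equiv.Perm (Fin (k+1)) × Fin (k+2) ≃ Equiv.Perm (Fin (k+2)) :=
  Equiv.ofBijective (fun p => myAppend p.1 p.2) <| by
    rw [Fintype.bijective_iff_injective_and_card]
    refine ⟨?_, ?_⟩
    · rintro ⟨τ, v⟩ ⟨τ', v'⟩ h
      simp only at h
      have hv : v = v' := by
        have := DFunLike.congr_fun h (Fin.last (k+1))
        rwa [myAppend_last, myAppend_last] at this
      subst hv
      have hτ : τ = τ' := by
        ext i
        have := DFunLike.congr_fun h i.castSucc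
        rw [myAppend_castSucc, myAppend_castSucc] at this
        have := Fin.succAbove_right_injective (p := v) this
        exact congrArg Fin.val this
      simp [hτ]
    · simp [Fintype.card_perm, Nat.factorial_succ]
      ring

lemma myAppendEquiv_apply {k : ℕ} (τ : Equiv.Perm (Fin (k+1))) (v : Fin (k+2)) :
    myAppendEquiv k (τ, v) = myAppend τ v := rfl

lemma card_filter_le {k t : ℕ} (ht : t < k + 2) :
    (Finset.univ.filter fun v : Fin (k+2) => (v : ℕ) ≤ t).card = t + 1 := by
  have : (Finset.univ.filter fun v : Fin (k+2) => (v : ℕ) ≤ t) = Finset.Iic (⟨t, ht⟩ : Fin (k+2)) := by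
    ext v
    simp [Fin.le_def]
  rw [this, Fin.card_Iic]


lemma key_poly (d a b : ℕ) : a • (X:ℝ[X])^(d+1) + b • X^d = ((a:ℝ[X]) * X + (b:ℝ[X])) * X^d := by
  rw [nsmul_eq_mul, nsmul_eq_mul]; ring

theorem eulerianPoly_eq_sum_refined (n : ℕ) (hn : 2 ≤ n) :
    eulerianPoly n =
      ∑ j ∈ Finset.range (n - 1),
        (C ((n : ℝ) - j - 1) * X + C ((j : ℝ) + 1)) * refinedEulerianPoly (n - 1) j := by
  obtain ⟨k, rfl⟩ : ∃ k, n = k + 2 := ⟨n - 2, by omega⟩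
  show eulerianPoly (k+2) = ∑ j ∈ Finset.range (k+1),
      (C (((k+2:ℕ):ℝ) - (j:ℝ) - 1) * X + C ((j : ℝ) + 1)) * refinedEulerianPoly (k+1) j
  rw [eulerianPoly, ← Equiv.sum_comp (myAppendEquiv k) (fun σ => X ^ descents σ),
    Fintype.sum_prod_type]
  conv_rhs => simp only [refinedEulerianPoly, Finset.mul_sum, Finset.sum_filter]
  conv_rhs => rw [Finset.sum_comm]
  apply Finset.sum_congr rfl
  intro τ _
  set t := (τ (Fin.last k) : ℕ) with hdef
  have ht : t ≤ k := by have := (τ (Fin.last k)).isLt; omega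
  have LHSeq : (∑ v : Fin (k+2), (X:ℝ[X]) ^ descents (myAppendEquiv k (τ, v)))
        = (t + 1) • X ^ (descents τ + 1) + (k + 1 - t) • X ^ descents τ := by
    have step : ∀ v : Fin (k+2), (X:ℝ[X]) ^ descents (myAppendEquiv k (τ, v))
        = if (v:ℕ) ≤ t then X ^ (descents τ + 1) else X ^ descents τ := by
      intro v
      rw [myAppendEquiv_apply, descents_myAppend]
      split <;> simp
    rw [Finset.sum_congr rfl (fun v _ => step v), Finset.sum_ite, Finset.sum_const,
      Finset.sum_const]
    have hcard := card_filter_le (k := k) (t := t) (by omega)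
    have hcard2 : (Finset.univ.filter fun v : Fin (k+2) => ¬ ((v:ℕ) ≤ t)).card = k + 1 - t := by
      have htot := Finset.card_filter_add_card_filter_not
        (s := (Finset.univ : Finset (Fin (k+2)))) (p := fun v : Fin (k+2) => (v:ℕ) ≤ t)
      simp only [Finset.card_univ, Fintype.card_fin] at htot
      omega
    rw [hcard, hcard2]
  rw [LHSeq, key_poly]
  rw [Finset.sum_eq_single_of_mem (k - t) (by simp)]
  · have hcond : ∃ h : 0 < k + 1,
        (τ ⟨k + 1 - 1, Nat.sub_lt h Nat.one_pos⟩ : ℕ) = k + 1 - 1 - (k - t) := by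
      refine ⟨by omega, ?_⟩
      show t = k + 1 - 1 - (k - t)
      omega
    rw [if_pos hcond]
    have e1 : ((t + 1 : ℕ) : ℝ[X]) = C (((k + 2 : ℕ) : ℝ) - ((k - t : ℕ) : ℝ) - 1) := by
      rw [← C_eq_natCast]
      congr 1
      rw [Nat.cast_sub ht]
      push_cast; ring
    have e2 : ((k + 1 - t : ℕ) : ℝ[X]) = C (((k - t : ℕ) : ℝ) + 1) := by
      rw [← C_eq_natCast]
      congr 1
      rw [Nat.cast_sub ht, Nat.cast_sub (show t ≤ k + 1 by omega)]
      push_cast; ring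
    rw [e1, e2]
  · intro j hj hne
    rw [if_neg, mul_zero]
    rintro ⟨h, heq⟩
    have heq' : t = k + 1 - 1 - j := heq
    simp only [Finset.mem_range] at hj
    omega

end
end

section
/- For every n ≥ 3 and every integer k ≥ -2, the polynomial A_n(x) + k·x·A_{n-2}(x) has only real zeros. -/
open Polynomial

noncomputable section

/-!
Fix `z` with `Im z > 0`. Let `A_{n,v}` be the descent polynomial of the permutations of
`[n + 1]` ending in `v`, so that `A_{n+1} = ∑_v A_{n,v}` and, by inserting a new last entry,
`A_{n+1,v} = ∑_{u < v} A_{n,u} + x ∑_{u ≥ v} A_{n,u}`. Induction on `n` shows that the values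
`w_v = A_{n,v}(z)` are nonzero and that `w_u * conj w_{u'}` lies in the cone spanned by `1` and `z`
whenever `u ≤ u'`: this is the interlacing of the refined Eulerian polynomials, seen at one point.

Counting shows `A_{n+2} + k x A_n = ∑_u (α_u + β_u x) A_{n,u}` with `α` antitone, `β` monotone
and both positive as soon as `k ≥ -2`. For such weights `A = ∑ α_u w_u` and `B = ∑ β_u w_u`
satisfy `Im (A * conj B) ≥ 0`, which rules out `A + z B = 0`. Hence there are no zeros in the
upper half-plane, nor, by conjugation, in the lower one.
-/

open Equiv Finset

section Insertion

variable {m : ℕ}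

lemma descents_eq_card (σ : Perm (Fin (m + 1))) :
    descents σ = #{j : Fin m | σ j.succ < σ j.castSucc} := by
  rw [descents, card_filter, card_filter, Fin.sum_univ_castSucc]
  simp [Fin.succ]

def insertLast (v : Fin (m + 2)) (π : Perm (Fin (m + 1))) : Perm (Fin (m + 2)) :=
  (finSuccEquiv' (Fin.last (m + 1))).trans ((optionCongr π).trans (finSuccEquiv' v).symm)

@[simp]
lemma insertLast_last (v : Fin (m + 2)) (π : Perm (Fin (m + 1))) :
    insertLast v π (Fin.last (m + 1)) = v := by
  simp [insertLast]

@[simp]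
lemma insertLast_castSucc (v : Fin (m + 2)) (π : Perm (Fin (m + 1))) (i : Fin (m + 1)) :
    insertLast v π i.castSucc = v.succAbove (π i) := by
  rw [← Fin.succAbove_last]
  simp [insertLast, -Fin.succAbove_last]

lemma descents_insertLast (v : Fin (m + 2)) (π : Perm (Fin (m + 1))) :
    descents (insertLast v π) =
      descents π + if v ≤ (π (Fin.last m)).castSucc then 1 else 0 := by
  rw [descents_eq_card, descents_eq_card, card_filter, card_filter, Fin.sum_univ_castSucc]
  simp only [Fin.succ_castSucc, Fin.succ_last, insertLast_castSucc, insertLast_last,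
    Fin.succAbove_lt_succAbove_iff, Fin.lt_succAbove_iff_le_castSucc]

lemma sum_filter_apply_last_eq_sum_insertLast {M : Type*} [AddCommMonoid M] (v : Fin (m + 2))
    (f : Perm (Fin (m + 2)) → M) :
    ∑ σ with σ (Fin.last (m + 1)) = v, f σ = ∑ π, f (insertLast v π) := by
  let restrict (σ : Perm (Fin (m + 2))) : Perm (Option (Fin (m + 1))) :=
    (finSuccEquiv' (Fin.last (m + 1))).symm.trans (σ.trans (finSuccEquiv' v))
  symm
  refine sum_nbij' (insertLast v) (fun σ => removeNone (restrict σ)) (by simp) (by simp) ?_ ?_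
    fun _ _ => rfl
  · intro π _
    convert removeNone_optionCongr π using 2
    ext x : 1
    simp [insertLast, restrict]
  · intro σ hσ
    have hnone : restrict σ none = none := by simp_all [restrict]
    have hσ' : optionCongr (removeNone (restrict σ)) = restrict σ := by
      rw [map_equiv_removeNone, hnone, swap_self, ← Perm.one_def, one_mul]
    ext x : 1
    simp [insertLast, hσ', restrict]

end Insertion

-- This is `refinedEulerianPoly (n + 1) (n - v)`, indexed by the last entry itself.
def eulerianPolyWithLast (n : ℕ) (v : Fin (n + 1)) : ℝ[X] :=
  ∑ σ : Perm (Fin (n + 1)) with σ (Fin.last n) = v, X ^ descents σ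

lemma eulerianPoly_succ (n : ℕ) : eulerianPoly (n + 1) = ∑ v, eulerianPolyWithLast n v :=
  (sum_fiberwise _ _ _).symm

lemma eulerianPolyWithLast_zero (v : Fin 1) : eulerianPolyWithLast 0 v = 1 := by
  simp [eulerianPolyWithLast, descents, Subsingleton.elim _ v]

lemma eulerianPolyWithLast_succ (m : ℕ) (v : Fin (m + 2)) :
    eulerianPolyWithLast (m + 1) v =
      ∑ u, if v ≤ u.castSucc then X * eulerianPolyWithLast m u else eulerianPolyWithLast m u := by
  rw [eulerianPolyWithLast, sum_filter_apply_last_eq_sum_insertLast,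
    ← sum_fiberwise univ fun π => π (Fin.last m)]
  refine sum_congr rfl fun u _ => ?_
  by_cases h : v ≤ u.castSucc
  · rw [if_pos h, eulerianPolyWithLast, mul_sum]
    refine sum_congr rfl fun π hπ => ?_
    rw [descents_insertLast, (mem_filter.mp hπ).2, if_pos h, pow_succ, mul_comm]
  · rw [if_neg h, eulerianPolyWithLast]
    refine sum_congr rfl fun π hπ => ?_
    rw [descents_insertLast, (mem_filter.mp hπ).2, if_neg h, add_zero]

lemma eulerianPolyWithLast_succ_zero (m : ℕ) :
    eulerianPolyWithLast (m + 1) 0 = X * eulerianPoly (m + 1) := by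
  simp [eulerianPolyWithLast_succ, eulerianPoly_succ, mul_sum]

lemma eulerianPolyWithLast_succ_last (m : ℕ) :
    eulerianPolyWithLast (m + 1) (Fin.last (m + 1)) = eulerianPoly (m + 1) := by
  simp [eulerianPolyWithLast_succ, eulerianPoly_succ, (Fin.castSucc_lt_last _).not_ge]

lemma eulerianPoly_succ_succ (m : ℕ) :
    eulerianPoly (m + 2) = ∑ u : Fin (m + 1),
      (C ((m : ℝ) + 1 - u) + C ((u : ℝ) + 1) * X) * eulerianPolyWithLast m u := by
  simp_rw [eulerianPoly_succ, eulerianPolyWithLast_succ]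
  rw [sum_comm]
  refine sum_congr rfl fun u _ => ?_
  rw [sum_ite, sum_const, sum_const, filter_ge_eq_Iic, Fin.card_Iic]
  simp only [not_le, filter_lt_eq_Ioi, Fin.card_Ioi, Fin.val_castSucc, nsmul_eq_mul,
    map_add, map_sub, map_one, map_natCast]
  rw [show m + 2 - 1 - u = m - u + 1 by omega]
  push_cast [Nat.cast_sub (Fin.is_le u)]
  ring

/-- Half of `2K x A_{m+1}` is put on each end, using `A_{m+1,0} = x A_{m+1}` and
`A_{m+1,m+1} = A_{m+1}`: this keeps the first weight antitone and the second monotone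
exactly when `K ≥ -1`. -/
lemma eulerianPoly_add_eq_sum (m : ℕ) (K : ℝ) :
    eulerianPoly (m + 3) + C (2 * K) * X * eulerianPoly (m + 1) =
      ∑ u : Fin (m + 2), (C ((m : ℝ) + 2 - u + if u = 0 then K else 0) +
        C ((u : ℝ) + 1 + if u = Fin.last _ then K else 0) * X) *
          eulerianPolyWithLast (m + 1) u := by
  have hsplit : ∀ u : Fin (m + 2), (C ((m : ℝ) + 2 - u + if u = 0 then K else 0) +
      C ((u : ℝ) + 1 + if u = Fin.last _ then K else 0) * X) * eulerianPolyWithLast (m + 1) u =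
      (C (((m + 1 : ℕ) : ℝ) + 1 - u) + C ((u : ℝ) + 1) * X) * eulerianPolyWithLast (m + 1) u +
        ((if u = 0 then C K * eulerianPolyWithLast (m + 1) u else 0) +
          if u = Fin.last _ then C K * X * eulerianPolyWithLast (m + 1) u else 0) := by
    intro u
    split_ifs <;> simp only [map_add, map_sub, map_one, map_ofNat, map_natCast, Nat.cast_add,
      Nat.cast_one, add_zero] <;> ring
  rw [sum_congr rfl fun u _ => hsplit u, sum_add_distrib, sum_add_distrib, sum_ite_eq',
    sum_ite_eq', if_pos (mem_univ _), if_pos (mem_univ _), ← eulerianPoly_succ_succ,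
    eulerianPolyWithLast_succ_zero, eulerianPolyWithLast_succ_last, map_mul,
    show C (2 : ℝ) = 2 from rfl]
  ring

open Complex ComplexConjugate
open scoped NNReal

def sector (z : ℂ) : Submodule ℝ≥0 ℂ :=
  Submodule.span ℝ≥0 {1, z}

section Sector

variable {z w : ℂ}

lemma mem_sector_iff : w ∈ sector z ↔ ∃ a b : ℝ, 0 ≤ a ∧ 0 ≤ b ∧ (a : ℂ) + b * z = w := by
  rw [sector, Submodule.mem_span_pair]
  constructor
  · rintro ⟨a, b, rfl⟩
    exact ⟨a, b, a.2, b.2, by simp [NNReal.smul_def, real_smul]⟩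
  · rintro ⟨a, b, ha, hb, rfl⟩
    exact ⟨a.toNNReal, b.toNNReal, by simp [NNReal.smul_def, real_smul, ha, hb]⟩

lemma one_mem_sector : 1 ∈ sector z :=
  Submodule.subset_span (by simp)

lemma self_mem_sector : z ∈ sector z :=
  Submodule.subset_span (by simp)

lemma ofReal_mul_mem_sector {a : ℝ} (ha : 0 ≤ a) (hw : w ∈ sector z) :
    (a : ℂ) * w ∈ sector z := by
  simpa [NNReal.smul_def, real_smul, ha] using (sector z).smul_mem a.toNNReal hw

lemma ofReal_mem_sector {a : ℝ} (ha : 0 ≤ a) : (a : ℂ) ∈ sector z := by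
  simpa using ofReal_mul_mem_sector ha one_mem_sector

lemma mul_conj_mem_sector (hw : w ∈ sector z) : z * conj w ∈ sector z := by
  obtain ⟨a, b, ha, hb, rfl⟩ := mem_sector_iff.mp hw
  refine mem_sector_iff.mpr ⟨b * normSq z, a, mul_nonneg hb (normSq_nonneg z), ha, ?_⟩
  simp only [map_add, map_mul, conj_ofReal, ofReal_mul, ← mul_conj]
  ring

lemma im_nonneg_of_mem_sector (hz : 0 ≤ z.im) (hw : w ∈ sector z) : 0 ≤ w.im := by
  obtain ⟨a, b, -, hb, rfl⟩ := mem_sector_iff.mp hw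
  simpa using mul_nonneg hb hz

lemma eq_zero_of_mem_sector_of_neg_mem (hz : 0 < z.im) (hw : w ∈ sector z)
    (hw' : -w ∈ sector z) : w = 0 := by
  obtain ⟨a, b, ha, hb, rfl⟩ := mem_sector_iff.mp hw
  obtain ⟨a', b', ha', hb', h⟩ := mem_sector_iff.mp hw'
  have him := congrArg im h
  have hre := congrArg re h
  simp only [add_im, add_re, ofReal_im, ofReal_re, mul_im, mul_re, neg_im, neg_re, zero_mul,
    sub_zero, zero_add] at him hre
  obtain ⟨rfl, rfl⟩ : b = 0 ∧ b' = 0 := ⟨by nlinarith, by nlinarith⟩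
  obtain rfl : a = 0 := by linarith
  simp

lemma add_mul_ne_zero_of_mul_conj_mem_sector {x y : ℂ} (hz : 0 < z.im)
    (hxy : x * conj y ∈ sector z) (hy : y ≠ 0) : x + z * y ≠ 0 := by
  intro h
  have hpos : (normSq y : ℂ) * z ∈ sector z :=
    ofReal_mul_mem_sector (normSq_nonneg y) self_mem_sector
  have hneg : -((normSq y : ℂ) * z) ∈ sector z := by
    rwa [eq_neg_of_add_eq_zero_left h, neg_mul, mul_assoc, mul_conj, mul_comm] at hxy
  have hz0 : z ≠ 0 := fun h0 => by simp [h0] at hz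
  simpa [hy, hz0] using eq_zero_of_mem_sector_of_neg_mem hz hpos hneg

/-- For thresholds `v ≤ v'` the recurrence splits the previous row into blocks `P, M, Q`; the
product is `|P + z Q|² + (P M̄ + z · conj (P M̄)) + z |M|² + (|z|² M Q̄ + z · conj (M Q̄))`. -/
lemma window_mem_sector {P M Q : ℂ} (hPM : P * conj M ∈ sector z)
    (hMQ : M * conj Q ∈ sector z) :
    (P + z * (M + Q)) * conj (P + M + z * Q) ∈ sector z := by
  have key : (P + z * (M + Q)) * conj (P + M + z * Q) =
      (normSq (P + z * Q) : ℂ) + (P * conj M + z * conj (P * conj M)) + (normSq M : ℂ) * z +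
        ((normSq z : ℂ) * (M * conj Q) + z * conj (M * conj Q)) := by
    simp only [← mul_conj, map_add, map_mul, conj_conj]
    ring
  rw [key]
  refine add_mem (add_mem (add_mem ?_ ?_) ?_) ?_
  · exact ofReal_mem_sector (normSq_nonneg _)
  · exact add_mem hPM (mul_conj_mem_sector hPM)
  · exact ofReal_mul_mem_sector (normSq_nonneg _) self_mem_sector
  · exact add_mem (ofReal_mul_mem_sector (normSq_nonneg _) hMQ) (mul_conj_mem_sector hMQ)

end Sector

/-- For `Im z > 0`: along the chain the values `w u` are nonzero and turn clockwise, by a total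
angle of at most `arg z`. -/
structure IsSectorChain {ι : Type*} [Preorder ι] (z : ℂ) (w : ι → ℂ) : Prop where
  ne_zero : ∀ u, w u ≠ 0
  mul_conj_mem : ∀ ⦃u u'⦄, u ≤ u' → w u * conj (w u') ∈ sector z

lemma sum_sum_nonneg_of_add_swap_nonneg {ι : Type*} [Fintype ι] {f : ι → ι → ℝ}
    (hf : ∀ u u', 0 ≤ f u u' + f u' u) : 0 ≤ ∑ u, ∑ u', f u u' := by
  have hsymm : 2 * ∑ u, ∑ u', f u u' = ∑ u, ∑ u', (f u u' + f u' u) := by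
    rw [two_mul]
    nth_rw 2 [sum_comm]
    simp only [sum_add_distrib]
  have := sum_nonneg fun u (_ : u ∈ univ) => sum_nonneg fun u' (_ : u' ∈ univ) => hf u u'
  linarith

namespace IsSectorChain

variable {ι : Type*} {z : ℂ} {w : ι → ℂ}

lemma sum_mul_conj_sum_mem [Preorder ι] (h : IsSectorChain z w) {s t : Finset ι}
    (hst : ∀ a ∈ s, ∀ b ∈ t, a ≤ b) : (∑ a ∈ s, w a) * conj (∑ b ∈ t, w b) ∈ sector z := by
  rw [map_sum, sum_mul_sum]
  exact sum_mem fun a ha => sum_mem fun b hb => h.mul_conj_mem (hst a ha b hb)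

lemma sum_ofReal_mul_ne_zero [LinearOrder ι] (hz : 0 < z.im) (h : IsSectorChain z w)
    {s : Finset ι} (hs : s.Nonempty) {c : ι → ℝ} (hc : ∀ u ∈ s, 0 < c u) :
    ∑ u ∈ s, (c u : ℂ) * w u ≠ 0 := by
  obtain ⟨u₀, hu₀⟩ := hs
  set L := s.max' ⟨u₀, hu₀⟩
  have hmem : ∀ u ∈ s, (c u : ℂ) * w u * conj (w L) ∈ sector z := fun u hu => by
    rw [mul_assoc]
    exact ofReal_mul_mem_sector (hc u hu).le (h.mul_conj_mem (s.le_max' u hu))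
  intro hsum
  have hsplit : (c u₀ : ℂ) * w u₀ * conj (w L) +
      ∑ u ∈ s.erase u₀, (c u : ℂ) * w u * conj (w L) = 0 := by
    rw [add_sum_erase s (fun u => (c u : ℂ) * w u * conj (w L)) hu₀, ← sum_mul, hsum, zero_mul]
  have h₀ := eq_zero_of_mem_sector_of_neg_mem hz (hmem u₀ hu₀) <| by
    rw [neg_eq_of_add_eq_zero_right hsplit]
    exact sum_mem fun u hu => hmem u (mem_of_mem_erase hu)
  simp [h.ne_zero, (hc u₀ hu₀).ne'] at h₀

/-- `A = ∑ α u w u` and `B = ∑ β u w u` have `Im (A * conj B) ≥ 0`, while `A = -z B` would give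
`Im (A * conj B) = -Im z * |B|² < 0`. -/
lemma sum_mul_ne_zero_of_slope [Fintype ι] [Nonempty ι] [LinearOrder ι] (hz : 0 < z.im)
    (h : IsSectorChain z w) {α β : ι → ℝ} (hβ : ∀ u, 0 < β u)
    (hαβ : ∀ ⦃u u'⦄, u ≤ u' → α u' * β u ≤ α u * β u') :
    ∑ u, ((α u : ℂ) + β u * z) * w u ≠ 0 := by
  set A := ∑ u, (α u : ℂ) * w u
  set B := ∑ u, (β u : ℂ) * w u
  have hB : B ≠ 0 := h.sum_ofReal_mul_ne_zero hz univ_nonempty fun u _ => hβ u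
  have hpair : ∀ ⦃u u'⦄, u ≤ u' → 0 ≤ α u * β u' * (w u * conj (w u')).im +
      α u' * β u * (w u' * conj (w u)).im := fun u u' huu' => by
    have hswap : (w u' * conj (w u)).im = -(w u * conj (w u')).im := by
      rw [← conj_im, map_mul, conj_conj, mul_comm]
    rw [hswap]
    nlinarith [hαβ huu', im_nonneg_of_mem_sector hz.le (h.mul_conj_mem huu')]
  have him : 0 ≤ (A * conj B).im := by
    have hexp : (A * conj B).im = ∑ u, ∑ u', α u * β u' * (w u * conj (w u')).im := by
      simp only [A, B, map_sum, sum_mul_sum, im_sum, map_mul, conj_ofReal]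
      refine sum_congr rfl fun u _ => sum_congr rfl fun u' _ => ?_
      rw [show (α u : ℂ) * w u * ((β u' : ℂ) * conj (w u')) =
        ((α u * β u' : ℝ) : ℂ) * (w u * conj (w u')) by push_cast; ring, im_ofReal_mul]
    rw [hexp]
    refine sum_sum_nonneg_of_add_swap_nonneg fun u u' => ?_
    rcases le_total u u' with huu' | hu'u
    · exact hpair huu'
    · rw [add_comm]
      exact hpair hu'u
  intro h0
  have hA : A = -(z * B) := by
    rw [eq_neg_iff_add_eq_zero, ← h0, mul_sum, ← sum_add_distrib]
    exact sum_congr rfl fun u _ => by ring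
  rw [hA, neg_mul, mul_assoc, mul_conj, neg_im, im_mul_ofReal] at him
  nlinarith [normSq_pos.mpr hB]

end IsSectorChain

section Windows

variable {n : ℕ}

def windowSum (w : Fin n → ℂ) (a b : ℕ) : ℂ :=
  ∑ u : Fin n with a ≤ u.val ∧ u.val < b, w u

lemma windowSum_add_windowSum (w : Fin n → ℂ) {a b c : ℕ} (hab : a ≤ b) (hbc : b ≤ c) :
    windowSum w a b + windowSum w b c = windowSum w a c := by
  simp only [windowSum, sum_filter, ← sum_add_distrib]
  refine sum_congr rfl fun u _ => ?_
  split_ifs <;> first | omega | simp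

lemma IsSectorChain.windowSum_mul_conj_mem {z : ℂ} {w : Fin n → ℂ} (h : IsSectorChain z w)
    {a b b' c : ℕ} (hb : b ≤ b') : windowSum w a b * conj (windowSum w b' c) ∈ sector z := by
  unfold windowSum
  exact h.sum_mul_conj_sum_mem fun u hu u' hu' => by
    simp only [mem_filter, mem_univ, true_and] at hu hu'
    rw [Fin.le_def]
    omega

lemma IsSectorChain.windowSum_ne_zero {z : ℂ} {w : Fin n → ℂ} (hz : 0 < z.im)
    (h : IsSectorChain z w) {a b : ℕ} (hab : a < b) (han : a < n) : windowSum w a b ≠ 0 := by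
  simpa [windowSum] using h.sum_ofReal_mul_ne_zero hz (c := fun _ => 1)
    (s := {u : Fin n | a ≤ u.val ∧ u.val < b}) ⟨⟨a, han⟩, by simp [hab]⟩ (by simp)

end Windows

section TailWeightedSum

variable {N : ℕ} {z : ℂ} {w : Fin (N + 1) → ℂ}

def tailWeightedSum (z : ℂ) (w : Fin (N + 1) → ℂ) (v : Fin (N + 2)) : ℂ :=
  ∑ u, if v ≤ u.castSucc then z * w u else w u

lemma tailWeightedSum_eq_windowSum (v : Fin (N + 2)) :
    tailWeightedSum z w v = windowSum w 0 v + z * windowSum w v (N + 1) := by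
  simp only [tailWeightedSum, windowSum, sum_filter, mul_sum, ← sum_add_distrib]
  refine sum_congr rfl fun u _ => ?_
  have := u.isLt
  simp only [Fin.le_def, Fin.val_castSucc]
  split_ifs <;> first | omega | ring

lemma IsSectorChain.tailWeightedSum (hz : 0 < z.im) (h : IsSectorChain z w) :
    IsSectorChain z (tailWeightedSum z w) where
  ne_zero v := by
    rw [tailWeightedSum_eq_windowSum]
    rcases (Fin.is_le v).lt_or_eq with hv | hv
    · exact add_mul_ne_zero_of_mul_conj_mem_sector hz (h.windowSum_mul_conj_mem le_rfl)
        (h.windowSum_ne_zero hz hv hv)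
    · have hempty : windowSum w v (N + 1) = 0 := by
        refine sum_eq_zero fun u hu => ?_
        simp only [mem_filter, mem_univ, true_and] at hu
        omega
      rw [hempty, mul_zero, add_zero, hv]
      exact h.windowSum_ne_zero hz N.succ_pos N.succ_pos
  mul_conj_mem v v' hvv' := by
    rw [tailWeightedSum_eq_windowSum, tailWeightedSum_eq_windowSum,
      ← windowSum_add_windowSum w (Nat.zero_le v) (Fin.le_def.mp hvv'),
      ← windowSum_add_windowSum w (Fin.le_def.mp hvv') (Fin.is_le v')]
    exact window_mem_sector (h.windowSum_mul_conj_mem le_rfl) (h.windowSum_mul_conj_mem le_rfl)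

end TailWeightedSum

lemma aeval_eulerianPolyWithLast_succ (z : ℂ) (m : ℕ) (v : Fin (m + 2)) :
    aeval z (eulerianPolyWithLast (m + 1) v) =
      tailWeightedSum z (fun u => aeval z (eulerianPolyWithLast m u)) v := by
  simp only [eulerianPolyWithLast_succ, map_sum, apply_ite (aeval z), map_mul, aeval_X,
    tailWeightedSum]

lemma isSectorChain_eulerianPolyWithLast {z : ℂ} (hz : 0 < z.im) (n : ℕ) :
    IsSectorChain z fun u => aeval z (eulerianPolyWithLast n u) := by
  induction n with
  | zero =>
    exact ⟨fun u => by simp [eulerianPolyWithLast_zero],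
      fun u u' _ => by simpa [eulerianPolyWithLast_zero] using one_mem_sector⟩
  | succ m ih =>
    simpa only [aeval_eulerianPolyWithLast_succ] using ih.tailWeightedSum hz

lemma aeval_eulerianPoly_add_ne_zero {z : ℂ} (hz : 0 < z.im) (m : ℕ) {K : ℝ} (hK : -1 ≤ K) :
    aeval z (eulerianPoly (m + 3) + C (2 * K) * X * eulerianPoly (m + 1)) ≠ 0 := by
  set α : Fin (m + 2) → ℝ := fun u => (m : ℝ) + 2 - u + if u = 0 then K else 0
  set β : Fin (m + 2) → ℝ := fun u => (u : ℝ) + 1 + if u = Fin.last _ then K else 0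
  have hα : Antitone α := Fin.antitone_iff_succ_le.mpr fun i => by
    have : -1 ≤ if i.castSucc = 0 then K else 0 := by split_ifs <;> linarith
    simp only [α, Fin.succ_ne_zero, if_false, Fin.val_succ, Fin.val_castSucc]
    push_cast
    linarith
  have hβ : Monotone β := Fin.monotone_iff_le_succ.mpr fun i => by
    have : -1 ≤ if i.succ = Fin.last _ then K else 0 := by split_ifs <;> linarith
    simp only [β, (Fin.castSucc_lt_last i).ne, if_false, Fin.val_succ, Fin.val_castSucc]
    push_cast
    linarith
  have hαpos : ∀ u, 0 ≤ α u := fun u =>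
    le_trans (by simp [α]) (hα (Fin.le_last u))
  have hβpos : ∀ u, 0 < β u := fun u =>
    lt_of_lt_of_le (by simp [β]) (hβ (Fin.zero_le u))
  rw [eulerianPoly_add_eq_sum]
  change aeval z (∑ u, (C (α u) + C (β u) * X) * eulerianPolyWithLast (m + 1) u) ≠ 0
  simp only [map_sum, map_mul, map_add, aeval_C, aeval_X, coe_algebraMap]
  exact (isSectorChain_eulerianPolyWithLast hz (m + 1)).sum_mul_ne_zero_of_slope hz hβpos
    fun u u' h => mul_le_mul (hα h) (hβ h) (hβpos u).le (hαpos u)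

lemma im_eq_zero_of_aeval_eq_zero {p : ℝ[X]} (hp : ∀ z : ℂ, 0 < z.im → aeval z p ≠ 0) {z : ℂ}
    (hz : aeval z p = 0) : z.im = 0 := by
  by_contra hne
  rcases lt_or_gt_of_ne hne with hlt | hgt
  · exact hp (conj z) (by simpa using hlt) (by rw [aeval_conj, hz, map_zero])
  · exact hp z hgt hz

theorem eulerian_add_real_rooted_int (n : ℕ) (hn : 3 ≤ n) (k : ℤ) (hk : -2 ≤ k) :
    ∀ z : ℂ, aeval z (eulerianPoly n + C (k : ℝ) * X * eulerianPoly (n - 2)) = 0 →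
      z.im = 0 := by
  obtain ⟨m, rfl⟩ : ∃ m, n = m + 3 := ⟨n - 3, by omega⟩
  have hK : -1 ≤ (k : ℝ) / 2 := by
    have : (-2 : ℝ) ≤ k := by exact_mod_cast hk
    linarith
  rw [show m + 3 - 2 = m + 1 by omega, show (k : ℝ) = 2 * ((k : ℝ) / 2) by ring]
  exact fun z => im_eq_zero_of_aeval_eq_zero fun w hw => aeval_eulerianPoly_add_ne_zero hw m hK

end
end

section
/- The descent polynomial of (n-2)-stack sortable permutations satisfies W_{n,n-2}(x) = A_n(x) - x·A_{n-2}(x). -/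
open Polynomial

noncomputable section

/-- The stack-sorting map `s`: `s(L m R) = s(L) s(R) m` where `m` is the maximal entry. -/
def stackSort (w : List ℕ) : List ℕ :=
  if hw : w = [] then []
  else
    have hmem : w.foldr max 0 ∈ w := by
      induction w with
      | nil => simp at hw
      | cons a l ih =>
        rcases eq_or_ne l [] with h | h
        · simp [h]
        · rcases max_cases a (l.foldr max 0) with ⟨h1, _⟩ | ⟨h1, _⟩ <;>
            simp [List.foldr_cons, h1, ih h]
    have hi : w.idxOf (w.foldr max 0) < w.length := List.idxOf_lt_length_iff.mpr hmem
    stackSort (w.take (w.idxOf (w.foldr max 0))) ++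
      stackSort (w.drop (w.idxOf (w.foldr max 0) + 1)) ++ [w.foldr max 0]
termination_by w.length
decreasing_by
  · simp only [List.length_take, List.foldr_attach]; omega
  · simp only [List.length_drop]
    omega

/-- A permutation `σ ∈ S_n` is `t`-stack sortable if `t` applications of the stack-sorting
map to the word `σ₁ σ₂ ⋯ σₙ` yield the identity permutation. -/
def IsStackSortable (n t : ℕ) (σ : Equiv.Perm (Fin n)) : Prop :=
  stackSort^[t] (List.ofFn fun i => (σ i : ℕ)) = List.ofFn fun i : Fin n => (i : ℕ)

open Classical in
/-- `W_{n,t}(x)`: the descent polynomial of `t`-stack sortable permutations of `[n]`. -/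
def stackSortablePoly (n t : ℕ) : Polynomial ℝ :=
  ∑ σ ∈ Finset.univ.filter (fun σ : Equiv.Perm (Fin n) => IsStackSortable n t σ),
    X ^ descents σ

open Classical in
/-- `W_t(n,k)`: the number of `t`-stack sortable permutations of `[n]` with `k` descents. -/
def stackSortableCount (n t k : ℕ) : ℕ :=
  (Finset.univ.filter fun σ : Equiv.Perm (Fin n) =>
    IsStackSortable n t σ ∧ descents σ = k).card

/-- The Eulerian number `A(m,j)`: the number of permutations of `[m]` with `j` descents. -/
def eulerianNum (m j : ℕ) : ℕ :=
  (Finset.univ.filter fun σ : Equiv.Perm (Fin m) => descents σ = j).card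

/-!
A word `w` with distinct entries and `|w| = k + 2` is sorted by `k` passes of stack sorting
unless it ends with its maximum followed by its minimum.  Induct on `k`: writing `w = L m R`
with `m` maximal, `s(w) = s(L) s(R) m`, so `s^(k+1)(w)` is sorted iff `s^k(s(L) s(R))` is, and
both `w` and `s(L) s(R)` end with their maximum followed by their minimum exactly when `R` is a
single entry smaller than everything in `L` (otherwise each ends with an ascent or its
penultimate entry is not its maximum).

The permutations of `[k + 2]` ending in `k + 2, 1` correspond to `S_k` by deleting the last two
letters and standardizing, and this deletes exactly one descent; hence
`W_{k+2,k} = A_{k+2} - x A_k`.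
-/

open List

theorem stackSort_nil : stackSort [] = [] := by
  rw [stackSort]; simp

theorem stackSort_append_cons {L R : List ℕ} {m : ℕ} (hmL : m ∉ L)
    (hm : ∀ x ∈ L ++ R, x ≤ m) :
    stackSort (L ++ m :: R) = stackSort L ++ stackSort R ++ [m] := by
  have hmax : (L ++ m :: R).foldr max 0 = m := by
    refine le_antisymm (max_le_of_forall_le _ _ fun x hx => ?_) (le_max_of_le (by simp) le_rfl)
    obtain h | rfl | h : x ∈ L ∨ x = m ∨ x ∈ R := by simpa using hx
    exacts [hm x (mem_append_left _ h), le_rfl, hm x (mem_append_right _ h)]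
  have hidx : (L ++ m :: R).idxOf m = L.length := by
    rw [idxOf_append_of_notMem hmL, idxOf_cons_self, Nat.add_zero]
  rw [stackSort, dif_neg (by simp)]
  simp [hmax, hidx]

theorem exists_eq_append_cons_max {v : List ℕ} (hv : v ≠ []) :
    ∃ L m R, v = L ++ m :: R ∧ m ∉ L ∧ ∀ x ∈ L ++ R, x ≤ m := by
  obtain ⟨L, R, hmL, hv', -⟩ := exists_erase_eq (max_mem hv)
  refine ⟨L, _, R, hv', hmL, fun x hx => le_max_of_mem ?_⟩
  rw [hv']
  simpa using Or.imp_right Or.inr (mem_append.mp hx)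

theorem stackSort_append_cons_of_lt {L R : List ℕ} {m : ℕ} (hm : ∀ x ∈ L ++ R, x < m) :
    stackSort (L ++ m :: R) = stackSort L ++ stackSort R ++ [m] :=
  stackSort_append_cons (fun h => lt_irrefl m (hm m (mem_append_left R h))) fun x hx => (hm x hx).le

theorem stackSort_singleton (b : ℕ) : stackSort [b] = [b] := by
  simpa [stackSort_nil] using stackSort_append_cons_of_lt (L := []) (R := []) (m := b) (by simp)

theorem exists_eq_append_cons_of_nodup {v : List ℕ} (hnd : v.Nodup) (hv : v ≠ []) :
    ∃ L m R, v = L ++ m :: R ∧ ∀ x ∈ L ++ R, x < m := by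
  obtain ⟨L, m, R, rfl, -, hm⟩ := exists_eq_append_cons_max hv
  have hmLR : m ∉ L ++ R := (nodup_cons.mp (nodup_middle.mp hnd)).1
  exact ⟨L, m, R, rfl, fun x hx => (hm x hx).lt_of_ne (ne_of_mem_of_not_mem hx hmLR)⟩

theorem stackSort_perm (v : List ℕ) : stackSort v ~ v := by
  rcases eq_or_ne v [] with rfl | hv
  · rw [stackSort_nil]
  obtain ⟨L, m, R, rfl, hmL, hm⟩ := exists_eq_append_cons_max hv
  rw [stackSort_append_cons hmL hm]
  calc stackSort L ++ stackSort R ++ [m] ~ L ++ R ++ [m] :=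
        ((stackSort_perm L).append (stackSort_perm R)).append_right _
    _ ~ L ++ m :: R := by rw [append_assoc]; exact perm_append_comm.append_left L
termination_by v.length

theorem stackSort_iterate_perm (t : ℕ) (v : List ℕ) : stackSort^[t] v ~ v := by
  induction t generalizing v with
  | zero => rfl
  | succ t ih => exact (ih _).trans (stackSort_perm v)

theorem stackSort_append_singleton_of_lt {v : List ℕ} {m : ℕ} (hm : ∀ x ∈ v, x < m) :
    stackSort (v ++ [m]) = stackSort v ++ [m] := by
  simpa [stackSort_nil] using stackSort_append_cons_of_lt (R := []) (by simpa using hm)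

theorem stackSort_iterate_append_singleton_of_lt (t : ℕ) {v : List ℕ} {m : ℕ}
    (hm : ∀ x ∈ v, x < m) : stackSort^[t] (v ++ [m]) = stackSort^[t] v ++ [m] := by
  induction t generalizing v with
  | zero => rfl
  | succ t ih =>
    rw [Function.iterate_succ_apply, Function.iterate_succ_apply,
      stackSort_append_singleton_of_lt hm]
    exact ih fun x hx => hm x ((stackSort_perm v).subset hx)

theorem exists_stackSort_eq_append_pair_le {v : List ℕ} (hv : 2 ≤ v.length) :
    ∃ u a b, stackSort v = u ++ [a, b] ∧ a ≤ b := by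
  obtain ⟨L, m, R, rfl, hmL, hm⟩ :=
    exists_eq_append_cons_max (v := v) (by rintro rfl; simp at hv)
  have hne : stackSort L ++ stackSort R ≠ [] := by
    rw [← length_pos_iff, length_append, (stackSort_perm L).length_eq,
      (stackSort_perm R).length_eq]
    simp only [length_append, length_cons] at hv
    omega
  obtain ⟨u, a, hu⟩ := (eq_nil_or_concat _).resolve_left hne
  rw [concat_eq_append] at hu
  refine ⟨u, a, m, by simp [stackSort_append_cons hmL hm, hu], hm a ?_⟩
  exact ((stackSort_perm L).append (stackSort_perm R)).subset (hu ▸ by simp)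

theorem sortedLT_append_singleton_iff {v : List ℕ} {m : ℕ} (hm : ∀ x ∈ v, x < m) :
    (v ++ [m]).SortedLT ↔ v.SortedLT := by
  simp only [sortedLT_iff_pairwise, pairwise_append, pairwise_singleton, mem_singleton, true_and]
  exact and_iff_left fun x hx _ hy => hy ▸ hm x hx

def EndsWithMaxMin (w : List ℕ) : Prop :=
  ∃ u a b, w = u ++ [a, b] ∧ b < a ∧ ∀ x ∈ u, b < x ∧ x < a

theorem endsWithMaxMin_append_pair_iff {u : List ℕ} {a b : ℕ} :
    EndsWithMaxMin (u ++ [a, b]) ↔ b < a ∧ ∀ x ∈ u, b < x ∧ x < a := by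
  constructor
  · rintro ⟨u', a', b', h, hba, hu⟩
    obtain ⟨rfl, h'⟩ := append_inj' h rfl
    simp only [cons.injEq, and_true] at h'
    obtain ⟨rfl, rfl⟩ := h'
    exact ⟨hba, hu⟩
  · rintro ⟨hba, hu⟩
    exact ⟨u, a, b, rfl, hba, hu⟩

theorem not_endsWithMaxMin_append_stackSort (u : List ℕ) {v : List ℕ} (hv : 2 ≤ v.length) :
    ¬ EndsWithMaxMin (u ++ stackSort v) := by
  obtain ⟨u', a, b, h, hab⟩ := exists_stackSort_eq_append_pair_le hv
  rw [h, ← append_assoc, endsWithMaxMin_append_pair_iff]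
  exact fun h => hab.not_gt h.1

theorem endsWithMaxMin_append_cons_iff {L R : List ℕ} {m : ℕ} (hm : ∀ x ∈ L ++ R, x < m) :
    EndsWithMaxMin (L ++ m :: R) ↔ ∃ b, R = [b] ∧ ∀ x ∈ L, b < x := by
  rcases eq_nil_or_concat R with rfl | ⟨R', b, rfl⟩
  · simp only [reduceCtorEq, false_and, exists_false, iff_false]
    rcases eq_nil_or_concat L with rfl | ⟨L', c, rfl⟩
    · rintro ⟨u, a, b, h, -⟩
      simpa using congrArg length h
    · rw [concat_eq_append, append_assoc, singleton_append, endsWithMaxMin_append_pair_iff]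
      exact fun h => (hm c (by simp)).not_gt h.1
  rcases eq_nil_or_concat R' with rfl | ⟨R'', c, rfl⟩
  · have hbm : b < m := hm b (by simp)
    rw [concat_eq_append, nil_append, endsWithMaxMin_append_pair_iff]
    simp only [cons.injEq, and_true, exists_eq_left', hbm, true_and]
    exact forall₂_congr fun x hx => and_iff_left (hm x (mem_append_left _ hx))
  · rw [concat_eq_append, concat_eq_append,
      show L ++ m :: (R'' ++ [c] ++ [b]) = (L ++ m :: R'') ++ [c, b] by simp,
      endsWithMaxMin_append_pair_iff]
    refine iff_of_false (fun h => (h.2 m (by simp)).2.asymm (hm c (by simp))) ?_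
    rintro ⟨b', h, -⟩
    simpa using congrArg length h

theorem endsWithMaxMin_stackSort_append_iff {L R : List ℕ} (hL : L.Nodup)
    (hlen : 2 ≤ L.length + R.length) :
    EndsWithMaxMin (stackSort L ++ stackSort R) ↔ ∃ b, R = [b] ∧ ∀ x ∈ L, b < x := by
  rcases R with _ | ⟨b, _ | ⟨c, R⟩⟩
  · simpa [stackSort_nil] using not_endsWithMaxMin_append_stackSort [] (by simpa using hlen)
  · obtain ⟨L₁, M, L₂, rfl, hM⟩ :=
      exists_eq_append_cons_of_nodup hL (by rintro rfl; simp at hlen)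
    rw [stackSort_singleton, stackSort_append_cons_of_lt hM, append_assoc, singleton_append,
      endsWithMaxMin_append_pair_iff]
    have hmem : ∀ x, x ∈ stackSort L₁ ++ stackSort L₂ ↔ x ∈ L₁ ++ L₂ :=
      fun x => ((stackSort_perm L₁).append (stackSort_perm L₂)).mem_iff
    simp only [hmem, cons.injEq, and_true, exists_eq_left', forall_mem_append, forall_mem_cons]
    grind
  · simpa using not_endsWithMaxMin_append_stackSort (stackSort L) (v := b :: c :: R) (by simp)

theorem sortedLT_stackSort_iterate_iff (n : ℕ) {w : List ℕ} (hw : w.Nodup)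
    (hlen : w.length = n + 2) :
    (stackSort^[n] w).SortedLT ↔ ¬ EndsWithMaxMin w := by
  induction n generalizing w with
  | zero =>
    obtain ⟨a, b, rfl⟩ := length_eq_two.mp hlen
    rw [Function.iterate_zero_apply, ← nil_append [a, b], endsWithMaxMin_append_pair_iff]
    have hab : a ≠ b := by simpa using hw
    simp [sortedLT_iff_pairwise]
    omega
  | succ n ih =>
    obtain ⟨L, m, R, rfl, hm⟩ :=
      exists_eq_append_cons_of_nodup hw (ne_nil_of_length_eq_add_one hlen)
    have hperm : stackSort L ++ stackSort R ~ L ++ R := (stackSort_perm L).append (stackSort_perm R)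
    have hLR : (L ++ R).Nodup := (nodup_middle.mp hw).of_cons
    have hlen' : (L ++ R).length = n + 2 := by simp at hlen ⊢; omega
    rw [Function.iterate_succ_apply, stackSort_append_cons_of_lt hm,
      stackSort_iterate_append_singleton_of_lt n (fun x hx => hm x (hperm.subset hx)),
      sortedLT_append_singleton_iff
        (fun x hx => hm x (((stackSort_iterate_perm n _).trans hperm).subset hx)),
      ih (hperm.nodup_iff.mpr hLR) (hperm.length_eq.trans hlen'),
      endsWithMaxMin_append_cons_iff hm,
      endsWithMaxMin_stackSort_append_iff (hLR.sublist (sublist_append_left L R))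
        (by simp only [length_append] at hlen'; omega)]

theorem ofFn_perm_range {n : ℕ} (σ : Equiv.Perm (Fin n)) :
    ofFn (fun i => (σ i : ℕ)) ~ range n := by
  refine (perm_ext_iff_of_nodup (nodup_ofFn.mpr (Fin.val_injective.comp σ.injective))
    nodup_range).mpr fun x => ?_
  simp only [mem_ofFn, mem_range]
  exact ⟨fun ⟨i, hi⟩ => hi ▸ (σ i).isLt, fun hx => ⟨σ.symm ⟨x, hx⟩, by simp⟩⟩

theorem isStackSortable_iff_sortedLT {n t : ℕ} {σ : Equiv.Perm (Fin n)} :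
    IsStackSortable n t σ ↔ (stackSort^[t] (ofFn fun i => (σ i : ℕ))).SortedLT := by
  have hid : (ofFn fun i : Fin n => (i : ℕ)).SortedLT := sortedLT_ofFn_iff.mpr Fin.val_strictMono
  refine ⟨fun h => h ▸ hid, fun h => h.eq_of_mem_iff hid fun x => ?_⟩
  rw [((stackSort_iterate_perm t _).trans (ofFn_perm_range σ)).mem_iff,
    ← (ofFn_perm_range (Equiv.refl _)).mem_iff]
  rfl

theorem endsWithMaxMin_append_pair_iff_of_perm_range {u : List ℕ} {a b k : ℕ}
    (h : u ++ [a, b] ~ range (k + 2)) : EndsWithMaxMin (u ++ [a, b]) ↔ a = k + 1 ∧ b = 0 := by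
  have hmem : ∀ x, x ∈ u ++ [a, b] ↔ x < k + 2 := fun x => h.mem_iff.trans mem_range
  have hnd := h.nodup_iff.mpr nodup_range
  simp only [mem_append, mem_cons, not_mem_nil, or_false] at hmem
  simp only [nodup_append, nodup_cons, mem_cons, not_mem_nil, or_false] at hnd
  have htop := hmem (k + 1)
  have hbot := hmem 0
  rw [endsWithMaxMin_append_pair_iff]
  grind

theorem endsWithMaxMin_ofFn_iff {k : ℕ} (σ : Equiv.Perm (Fin (k + 2))) :
    EndsWithMaxMin (ofFn fun i => (σ i : ℕ)) ↔
      σ (Fin.last k).castSucc = Fin.last (k + 1) ∧ σ (Fin.last (k + 1)) = 0 := by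
  have h := ofFn_perm_range σ
  rw [ofFn_succ', ofFn_succ', concat_eq_append, concat_eq_append, append_assoc,
    singleton_append] at h ⊢
  rw [endsWithMaxMin_append_pair_iff_of_perm_range h, Fin.ext_iff, Fin.ext_iff]
  simp

theorem not_isStackSortable_iff {k : ℕ} (σ : Equiv.Perm (Fin (k + 2))) :
    ¬ IsStackSortable (k + 2) k σ ↔
      σ (Fin.last k).castSucc = Fin.last (k + 1) ∧ σ (Fin.last (k + 1)) = 0 := by
  rw [isStackSortable_iff_sortedLT, sortedLT_stackSort_iterate_iff k
    ((ofFn_perm_range σ).nodup_iff.mpr nodup_range) length_ofFn, not_not,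
    endsWithMaxMin_ofFn_iff]

theorem descents_eq_add_one {k : ℕ} {τ : Equiv.Perm (Fin k)} {σ : Equiv.Perm (Fin (k + 2))}
    (hσ : ∀ i, (σ i.castSucc.castSucc : ℕ) = τ i + 1)
    (hpen : σ (Fin.last k).castSucc = Fin.last (k + 1)) (hlast : σ (Fin.last (k + 1)) = 0) :
    descents σ = descents τ + 1 := by
  have hσ' : ∀ (j : ℕ) (hj : j < k), (σ ⟨j, by omega⟩ : ℕ) = τ ⟨j, hj⟩ + 1 :=
    fun j hj => hσ ⟨j, hj⟩
  have hdes : ∀ i : Fin k,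
      (∃ h : (i : ℕ) + 1 < k + 2, σ ⟨i + 1, h⟩ < σ i.castSucc.castSucc) ↔
        ∃ h : (i : ℕ) + 1 < k, τ ⟨i + 1, h⟩ < τ i := by
    intro i
    simp only [Fin.lt_def, hσ]
    by_cases hi : (i : ℕ) + 1 < k
    · simp [hσ' _ hi, hi, show (i : ℕ) + 1 < k + 2 by omega]
    · have hpen' : (σ ⟨i + 1, by omega⟩ : ℕ) = k + 1 := by
        rw [show (⟨i + 1, _⟩ : Fin (k + 2)) = (Fin.last k).castSucc from
          Fin.ext (by simp; omega), hpen, Fin.val_last]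
      simp only [hpen']
      have := (τ i).isLt
      exact iff_of_false (fun ⟨_, h⟩ => by omega) fun ⟨h, _⟩ => hi h
  have hdes_pen : σ (Fin.last (k + 1)) < σ (Fin.last k).castSucc := by
    rw [hlast, hpen]
    exact Fin.last_pos
  simp only [descents, Finset.card_filter, Fin.sum_univ_castSucc, Fin.val_castSucc, hdes]
  rw [if_pos ⟨by simp, hdes_pen⟩, if_neg (by simp), add_zero]

theorem forall_not_lt_apply_eq_iff_finRotate_mul {k : ℕ} (ρ : Equiv.Perm (Fin (k + 2))) :
    (∀ i : Fin (k + 2), ¬ (i : ℕ) < k → ρ i = i) ↔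
      (finRotate (k + 2) * ρ) (Fin.last k).castSucc = Fin.last (k + 1) ∧
        (finRotate (k + 2) * ρ) (Fin.last (k + 1)) = 0 := by
  have hpen : (finRotate (k + 2)).symm (Fin.last (k + 1)) = (Fin.last k).castSucc := by
    rw [Equiv.symm_apply_eq]
    exact Fin.ext (by simp)
  have hlast : (finRotate (k + 2)).symm 0 = Fin.last (k + 1) := by
    rw [Equiv.symm_apply_eq, finRotate_last]
  simp only [Equiv.Perm.mul_apply, ← Equiv.eq_symm_apply, hpen, hlast]
  constructor
  · intro h
    exact ⟨h (Fin.last k).castSucc (by simp), h (Fin.last (k + 1)) (by simp)⟩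
  · rintro ⟨h₁, h₂⟩ i hi
    rcases Fin.eq_castSucc_or_eq_last i with ⟨j, rfl⟩ | rfl
    · rcases Fin.eq_castSucc_or_eq_last j with ⟨j, rfl⟩ | rfl
      · exact (hi (by simp)).elim
      · exact h₁
    · exact h₂

/-- `τ ↦ finRotate ∘ τ'`, where `τ'` extends `τ` by fixing `k` and `k + 1`; its word is
`τ₀+1 ⋯ τₖ₋₁+1, k+1, 0`. -/
def permEquivEndsWithMaxZero (k : ℕ) :
    Equiv.Perm (Fin k) ≃ {σ : Equiv.Perm (Fin (k + 2)) //
      σ (Fin.last k).castSucc = Fin.last (k + 1) ∧ σ (Fin.last (k + 1)) = 0} :=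
  ((Fin.castLEquiv (Nat.le_add_right k 2)).permCongr.trans
      (Equiv.Perm.subtypeEquivSubtypePerm _)).trans
    (Equiv.subtypeEquiv (Equiv.mulLeft (finRotate (k + 2)))
      forall_not_lt_apply_eq_iff_finRotate_mul)

theorem permEquivEndsWithMaxZero_apply_castSucc_castSucc {k : ℕ} (τ : Equiv.Perm (Fin k))
    (i : Fin k) :
    ((permEquivEndsWithMaxZero k τ : Equiv.Perm (Fin (k + 2))) i.castSucc.castSucc : ℕ) =
      τ i + 1 := by
  change (finRotate (k + 2) (Equiv.Perm.ofSubtype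
    ((Fin.castLEquiv (Nat.le_add_right k 2)).permCongr τ) i.castSucc.castSucc) : ℕ) = _
  rw [Equiv.Perm.ofSubtype_apply_of_mem _ (by simp), coe_finRotate_of_ne_last]
  · simp
  · have := (τ i).isLt
    simp [Fin.ext_iff]
    omega

theorem sum_endsWithMaxZero_X_pow_descents (k : ℕ) :
    ∑ σ ∈ Finset.univ.filter (fun σ : Equiv.Perm (Fin (k + 2)) =>
        σ (Fin.last k).castSucc = Fin.last (k + 1) ∧ σ (Fin.last (k + 1)) = 0),
      (X : ℝ[X]) ^ descents σ = X * eulerianPoly k := by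
  rw [Finset.sum_subtype _ fun _ => Finset.mem_filter_univ _,
    ← (permEquivEndsWithMaxZero k).sum_comp, eulerianPoly, Finset.mul_sum]
  refine Finset.sum_congr rfl fun τ _ => ?_
  obtain ⟨hpen, hlast⟩ := (permEquivEndsWithMaxZero k τ).2
  rw [descents_eq_add_one (permEquivEndsWithMaxZero_apply_castSucc_castSucc τ) hpen hlast,
    pow_succ', mul_comm]

theorem stackSortablePoly_eq (n : ℕ) (hn : 2 ≤ n) :
    stackSortablePoly n (n - 2) = eulerianPoly n - X * eulerianPoly (n - 2) := by
  classical
  obtain ⟨k, rfl⟩ := Nat.exists_eq_add_of_le' hn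
  rw [Nat.add_sub_cancel, eq_sub_iff_add_eq, ← sum_endsWithMaxZero_X_pow_descents,
    stackSortablePoly, eulerianPoly,
    ← Finset.sum_filter_add_sum_filter_not Finset.univ (IsStackSortable (k + 2) k)
      fun σ => (X : ℝ[X]) ^ descents σ]
  simp only [not_isStackSortable_iff]

end
end

section
/- For n > 3 and k ≥ -n, in the decomposition K_n(x) = ∑_{i=1}^{n-1} (a_i x + b_i)·A_{n-1,i-1}(x) with a_1 = n + k/2 - 1, a_i = n - i for 2 ≤ i ≤ n-2, a_{n-1} = 1, b_1 = 1, b_i = i for 2 ≤ i ≤ n-2, b_{n-1} = n + k/2 - 1, the coefficient sequences satisfy a_i·b_{i+1} - b_i·a_{i+1} ≥ 0 for all 1 ≤ i ≤ n-2. -/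
noncomputable section

/-- The coefficient sequence `a` (1-indexed, `1 ≤ i ≤ n - 1`):
`a_1 = n + k/2 - 1`, `a_i = n - i` for `2 ≤ i ≤ n - 2`, `a_{n-1} = 1`. -/
def aCoeff (n : ℕ) (k : ℝ) (i : ℕ) : ℝ :=
  if i = 1 then (n : ℝ) + k / 2 - 1 else if i = n - 1 then 1 else (n : ℝ) - i

/-- The coefficient sequence `b` (1-indexed, `1 ≤ i ≤ n - 1`):
`b_1 = 1`, `b_i = i` for `2 ≤ i ≤ n - 2`, `b_{n-1} = n + k/2 - 1`. -/
def bCoeff (n : ℕ) (k : ℝ) (i : ℕ) : ℝ :=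
  if i = 1 then 1 else if i = n - 1 then (n : ℝ) + k / 2 - 1 else (i : ℝ)

theorem coeff_determinant_nonneg (n : ℕ) (hn : 3 < n) (k : ℝ) (hk : -(n : ℝ) ≤ k) :
    ∀ i : ℕ, 1 ≤ i → i ≤ n - 2 →
      0 ≤ aCoeff n k i * bCoeff n k (i + 1) - bCoeff n k i * aCoeff n k (i + 1) := by
  intro i h1 h2
  have hnR : (4 : ℝ) ≤ (n : ℝ) := by exact_mod_cast hn
  by_cases hi1 : i = 1
  · subst hi1
    rw [aCoeff, bCoeff, aCoeff, bCoeff]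
    rw [if_pos rfl, if_pos rfl, if_neg (by omega : (1:ℕ)+1 ≠ 1),
      if_neg (by omega : (1:ℕ)+1 ≠ n - 1), if_neg (by omega : (1:ℕ)+1 ≠ 1),
      if_neg (by omega : (1:ℕ)+1 ≠ n - 1)]
    push_cast
    linarith
  · by_cases hin : i = n - 2
    · subst hin
      have he : n - 2 + 1 = n - 1 := by omega
      rw [aCoeff, bCoeff, aCoeff, bCoeff, he]
      rw [if_neg (by omega : n - 2 ≠ 1), if_neg (by omega : n - 2 ≠ n - 1),
        if_neg (by omega : n - 2 ≠ 1), if_neg (by omega : n - 2 ≠ n - 1),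
        if_neg (by omega : n - 1 ≠ 1), if_pos rfl,
        if_neg (by omega : n - 1 ≠ 1), if_pos rfl]
      have : ((n - 2 : ℕ) : ℝ) = (n : ℝ) - 2 := by
        have : (2:ℕ) ≤ n := by omega
        push_cast [this]; ring
      rw [this]
      nlinarith [hnR, hk]
    · have hi2 : 2 ≤ i := by omega
      have hin2 : i + 1 ≤ n - 2 := by omega
      rw [aCoeff, bCoeff, aCoeff, bCoeff]
      rw [if_neg (by omega : i ≠ 1), if_neg (by omega : i ≠ n - 1),
        if_neg (by omega : i ≠ 1), if_neg (by omega : i ≠ n - 1),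
        if_neg (by omega : i + 1 ≠ 1), if_neg (by omega : i + 1 ≠ n - 1),
        if_neg (by omega : i + 1 ≠ 1), if_neg (by omega : i + 1 ≠ n - 1)]
      push_cast
      ring_nf
      nlinarith [hnR]

end
end

section
/- For any real number k, K_n(x) = A_n(x) + k·x·A_{n-2}(x) equals ((n + k/2 - 1)x + 1)·A_{n-1,0}(x) + ∑_{j=1}^{n-3} ((n-j-1)x + j+1)·A_{n-1,j}(x) + (x + n + k/2 - 1)·A_{n-1,n-2}(x), for n ≥ 3. -/
open Polynomial

noncomputable section

open Equiv Finset

def ins {m : ℕ} (σ : Equiv.Perm (Fin m)) (a : Fin (m+1)) : Equiv.Perm (Fin (m+1)) :=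
  finSuccEquivLast.trans (σ.optionCongr.trans (finSuccEquiv' a).symm)

lemma ins_last {m} (σ : Equiv.Perm (Fin m)) (a : Fin (m+1)) : ins σ a (Fin.last m) = a := by
  simp [ins]
lemma ins_castSucc {m} (σ : Equiv.Perm (Fin m)) (a : Fin (m+1)) (i : Fin m) :
    ins σ a i.castSucc = a.succAbove (σ i) := by
  simp [ins]

lemma ins_bij {m} : Function.Bijective (fun p : Equiv.Perm (Fin m) × Fin (m+1) => ins p.1 p.2) := by
  rw [Fintype.bijective_iff_injective_and_card]
  constructor
  · rintro ⟨σ, a⟩ ⟨σ', a'⟩ h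
    simp only at h
    have ha : a = a' := by rw [← ins_last σ a, ← ins_last σ' a', h]
    subst ha
    have hσ : σ = σ' := by
      ext i
      have := congrArg (fun τ : Equiv.Perm (Fin (m+1)) => τ i.castSucc) h
      simp only [ins_castSucc] at this
      exact congrArg Fin.val (Fin.succAbove_right_injective this)
    simp [hσ]
  · simp [Fintype.card_perm, Nat.factorial_succ]
    ring

lemma descents_eq {N} (τ : Equiv.Perm (Fin (N+1))) :
    descents τ = ∑ i : Fin N, if τ i.succ < τ i.castSucc then 1 else 0 := by
  rw [descents, Finset.card_filter, Fin.sum_univ_castSucc]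
  have h1 : (if (∃ h : ((Fin.last N : Fin (N+1)) : ℕ) + 1 < N+1,
      τ ⟨((Fin.last N : Fin (N+1)) : ℕ) + 1, h⟩ < τ (Fin.last N)) then 1 else 0) = 0 := by
    simp
  rw [h1, add_zero]
  apply Finset.sum_congr rfl
  intro i _
  have hh : ((i.castSucc : Fin (N+1)) : ℕ) + 1 < N + 1 := by
    simpa using i.is_lt
  have hmk : ∀ h : ((i.castSucc : Fin (N+1)) : ℕ) + 1 < N + 1,
      (⟨((i.castSucc : Fin (N+1)) : ℕ) + 1, h⟩ : Fin (N+1)) = i.succ := by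
    intro h; ext; simp
  have hiff : (∃ h : ((i.castSucc : Fin (N+1)) : ℕ) + 1 < N + 1,
      τ ⟨((i.castSucc : Fin (N+1)) : ℕ) + 1, h⟩ < τ i.castSucc) ↔ τ i.succ < τ i.castSucc := by
    constructor
    · rintro ⟨h, hd⟩; rwa [hmk h] at hd
    · intro hd; exact ⟨hh, by rw [hmk hh]; exact hd⟩
  simp only [hiff]

lemma descents_ins {m} (σ : Equiv.Perm (Fin (m+1))) (a : Fin (m+2)) :
    descents (ins σ a) = descents σ
      + if (a : ℕ) ≤ (σ (Fin.last m) : ℕ) then 1 else 0 := by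
  rw [descents_eq (ins σ a), descents_eq σ, Fin.sum_univ_castSucc]
  congr 1
  · apply Finset.sum_congr rfl
    intro i _
    have e1 : (i.castSucc : Fin (m+1)).succ = (i.succ).castSucc := Fin.succ_castSucc i
    have e2 : ((i.castSucc : Fin (m+1)).castSucc : Fin (m+2)) = (i.castSucc).castSucc := rfl
    rw [e1, e2, ins_castSucc, ins_castSucc]
    simp [Fin.succAbove_lt_succAbove_iff]
  · have e1 : (Fin.last m : Fin (m+1)).succ = Fin.last (m+1) := rfl
    have e2 : ((Fin.last m : Fin (m+1)).castSucc : Fin (m+2)) = (Fin.last m).castSucc := rfl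
    rw [e1, e2, ins_last, ins_castSucc]
    simp [Fin.lt_succAbove_iff_le_castSucc, Fin.le_def]

lemma sum_ins (m : ℕ) : eulerianPoly (m+2)
    = ∑ σ : Equiv.Perm (Fin (m+1)), ∑ a : Fin (m+2), X ^ descents (ins σ a) := by
  rw [eulerianPoly, ← Fintype.sum_bijective _ ins_bij
    (fun p => X ^ descents (ins p.1 p.2)) (fun τ => X ^ descents τ) (fun p => rfl)]
  rw [Fintype.sum_prod_type]

lemma innerSum {m : ℕ} (σ : Equiv.Perm (Fin (m+1))) :
    ∑ a : Fin (m+2), (X : Polynomial ℝ) ^ descents (ins σ a)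
      = (C ((((σ (Fin.last m) : ℕ) + 1 : ℕ) : ℝ)) * X
          + C (((m + 1 - (σ (Fin.last m) : ℕ) : ℕ) : ℝ))) * X ^ descents σ := by
  set c := (σ (Fin.last m) : ℕ) with hc
  have hcm : c ≤ m := Nat.lt_succ_iff.mp (σ (Fin.last m)).is_lt
  have : ∀ a : Fin (m+2), (X : Polynomial ℝ) ^ descents (ins σ a)
      = (if (a : ℕ) ≤ c then X else 1) * X ^ descents σ := by
    intro a
    rw [descents_ins]
    split_ifs <;> ring
  rw [Finset.sum_congr rfl (fun a _ => this a), ← Finset.sum_mul]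
  congr 1
  rw [Fin.sum_univ_eq_sum_range (fun i => if i ≤ c then (X : Polynomial ℝ) else 1)]
  rw [Finset.range_eq_Ico, ← Finset.sum_Ico_consecutive _ (Nat.zero_le (c+1)) (by omega : c+1 ≤ m+2)]
  have e1 : ∑ i ∈ Finset.Ico 0 (c+1), (if i ≤ c then (X : Polynomial ℝ) else 1) = (c+1) • X := by
    rw [Finset.sum_congr rfl (fun i hi => if_pos (by simp [Finset.mem_Ico] at hi; omega))]
    simp [Nat.card_Ico]
  have e2 : ∑ i ∈ Finset.Ico (c+1) (m+2), (if i ≤ c then (X : Polynomial ℝ) else 1)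
      = ((m+1-c : ℕ) : Polynomial ℝ) := by
    rw [Finset.sum_congr rfl (fun i hi => if_neg (by simp [Finset.mem_Ico] at hi; omega)),
      Finset.sum_const, Nat.card_Ico, nsmul_eq_mul, mul_one]
    congr 1
    omega
  rw [e1, e2]
  simp only [nsmul_eq_mul, map_natCast]

lemma key1 (m : ℕ) : eulerianPoly (m+2) = ∑ j ∈ Finset.range (m+1),
    (C (((m+1-j : ℕ) : ℝ)) * X + C (((j+1 : ℕ) : ℝ))) * refinedEulerianPoly (m+1) j := by
  rw [sum_ins]
  rw [← Finset.sum_fiberwise_of_maps_to (t := Finset.range (m+1))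
    (g := fun σ : Equiv.Perm (Fin (m+1)) => m - (σ (Fin.last m) : ℕ))
    (fun σ _ => by simp only [Finset.mem_range]; omega)]
  apply Finset.sum_congr rfl
  intro j hj
  have hjm : j ≤ m := Nat.lt_succ_iff.mp (Finset.mem_range.mp hj)
  rw [refinedEulerianPoly, Finset.mul_sum]
  have hset : Finset.univ.filter
        (fun σ : Equiv.Perm (Fin (m+1)) => m - (σ (Fin.last m) : ℕ) = j)
      = Finset.univ.filter (fun σ : Equiv.Perm (Fin (m+1)) =>
          ∃ h : 0 < m+1, (σ ⟨m+1-1, Nat.sub_lt h Nat.one_pos⟩ : ℕ) = m+1-1-j) := by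
    ext σ
    have hlt := (σ (Fin.last m)).is_lt
    have : (⟨m+1-1, Nat.sub_lt (Nat.succ_pos m) Nat.one_pos⟩ : Fin (m+1)) = Fin.last m := rfl
    simp only [Finset.mem_filter, Finset.mem_univ, true_and, this]
    constructor
    · intro h; exact ⟨Nat.succ_pos m, by omega⟩
    · rintro ⟨h, h2⟩; omega
  rw [hset]
  apply Finset.sum_congr rfl
  intro σ hσ
  simp only [Finset.mem_filter] at hσ
  obtain ⟨-, hpos, hval⟩ := hσ
  have hval' : (σ (Fin.last m) : ℕ) = m - j := hval
  rw [innerSum σ, hval', show m - j + 1 = m + 1 - j by omega,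
    show m + 1 - (m - j) = j + 1 by omega]

lemma refined_sum (m j : ℕ) (hj : j ≤ m + 1) :
    refinedEulerianPoly (m+2) j
      = ∑ σ : Equiv.Perm (Fin (m+1)), X ^ descents (ins σ ⟨m+1-j, by omega⟩) := by
  rw [refinedEulerianPoly]
  symm
  apply Finset.sum_bij (fun (σ : Equiv.Perm (Fin (m+1))) _ => ins σ ⟨m+1-j, by omega⟩)
  · intro σ _
    simp only [Finset.mem_filter, Finset.mem_univ, true_and]
    refine ⟨Nat.succ_pos _, ?_⟩
    have hlast : (⟨m+2-1, Nat.sub_lt (Nat.succ_pos _) Nat.one_pos⟩ : Fin (m+2))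
        = Fin.last (m+1) := rfl
    rw [hlast, ins_last]
    simp only []
    omega
  · intro σ _ σ' _ h
    have := ins_bij.injective (a₁ := (σ, ⟨m+1-j, by omega⟩)) (a₂ := (σ', ⟨m+1-j, by omega⟩)) h
    exact (Prod.mk.injEq _ _ _ _ ▸ this).1
  · intro τ hτ
    simp only [Finset.mem_filter, Finset.mem_univ, true_and] at hτ
    obtain ⟨hpos, hval⟩ := hτ
    obtain ⟨⟨σ, a⟩, rfl⟩ := ins_bij.surjective τ
    refine ⟨σ, Finset.mem_univ σ, ?_⟩
    have hval' : ((ins σ a) (Fin.last (m+1)) : ℕ) = m+1-j := hval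
    rw [ins_last] at hval'
    have : a = ⟨m+1-j, by omega⟩ := Fin.ext hval'
    rw [this]
  · intro σ _
    rfl

lemma key2 (m : ℕ) : refinedEulerianPoly (m+2) 0 = eulerianPoly (m+1) := by
  rw [refined_sum m 0 (by omega), eulerianPoly]
  apply Finset.sum_congr rfl
  intro σ _
  rw [descents_ins]
  have : ¬ ((⟨m+1-0, by omega⟩ : Fin (m+2)) : ℕ) ≤ (σ (Fin.last m) : ℕ) := by
    have := (σ (Fin.last m)).is_lt
    simp only []
    omega
  rw [if_neg this, add_zero]

lemma key3 (m : ℕ) : refinedEulerianPoly (m+2) (m+1) = X * eulerianPoly (m+1) := by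
  rw [refined_sum m (m+1) le_rfl, eulerianPoly, Finset.mul_sum]
  apply Finset.sum_congr rfl
  intro σ _
  rw [descents_ins]
  have : ((⟨m+1-(m+1), by omega⟩ : Fin (m+2)) : ℕ) ≤ (σ (Fin.last m) : ℕ) := by
    simp only []
    omega
  rw [if_pos this, pow_succ]
  ring

theorem K_decomposition (n : ℕ) (hn : 3 ≤ n) (k : ℝ) :
    eulerianPoly n + C k * X * eulerianPoly (n - 2) =
      (C ((n : ℝ) + k / 2 - 1) * X + 1) * refinedEulerianPoly (n - 1) 0 +
        ∑ j ∈ Finset.Icc 1 (n - 3),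
          (C ((n : ℝ) - j - 1) * X + C ((j : ℝ) + 1)) * refinedEulerianPoly (n - 1) j +
        (X + C ((n : ℝ) + k / 2 - 1)) * refinedEulerianPoly (n - 1) (n - 2) := by
  obtain ⟨m, rfl⟩ : ∃ m, n = m + 3 := ⟨n - 3, by omega⟩
  have e1 : m + 3 - 1 = m + 2 := rfl
  have e2 : m + 3 - 2 = m + 1 := rfl
  have e3 : m + 3 - 3 = m := rfl
  rw [e1, e2, e3]
  have hkey1 := key1 (m+1)
  rw [show m + 1 + 2 = m + 3 from rfl, show m + 1 + 1 = m + 2 from rfl] at hkey1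
  have hsplit : Finset.range (m+2) = insert 0 (insert (m+1) (Finset.Icc 1 m)) := by
    ext i; simp [Finset.mem_Icc]; omega
  rw [hsplit, Finset.sum_insert (by simp), Finset.sum_insert (by simp [Finset.mem_Icc])]
    at hkey1
  rw [hkey1, key2 m, key3 m]
  have hmid : ∑ j ∈ Finset.Icc 1 m,
        (C (((m+3:ℕ) : ℝ) - j - 1) * X + C ((j : ℝ) + 1)) * refinedEulerianPoly (m+2) j
      = ∑ j ∈ Finset.Icc 1 m,
        (C (((m+2-j : ℕ)) : ℝ) * X + C (((j+1 : ℕ)) : ℝ)) * refinedEulerianPoly (m+2) j := by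
    apply Finset.sum_congr rfl
    intro j hj
    obtain ⟨hj1, hj2⟩ := Finset.mem_Icc.mp hj
    have h1 : (((m+2-j : ℕ)) : ℝ) = ((m+3:ℕ) : ℝ) - j - 1 := by
      rw [Nat.cast_sub (by omega : j ≤ m+2)]; push_cast; ring
    have h2 : (((j+1 : ℕ)) : ℝ) = (j : ℝ) + 1 := by push_cast; ring
    rw [h1, h2]
  rw [hmid]
  have hCa : C (((m+3:ℕ) : ℝ) + k / 2 - 1) = C (((m+2:ℕ)) : ℝ) + C (k/2) := by
    rw [← C_add]; congr 1; push_cast; ring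
  have hk2 : C (k/2) + C (k/2) = C k := by
    rw [← C_add]; congr 1; ring
  rw [hCa]
  rw [show m + 2 - 0 = m + 2 from rfl, show m + 2 - (m+1) = 1 by omega]
  simp only [map_natCast]
  push_cast
  linear_combination (-(X * eulerianPoly (m+1))) * hk2

end
end
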